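/- arXiv:2401.04548 — 3 statements merged into one kernel-verified Lean document; each statement's English description precedes it below -/
import Mathlib

section
/- For the Lie algebra L(3,2,x) with brackets [f_1, f_3] = f_1, [f_2, f_3] = x f_2, [f_1, f_2] = 0, and orthonormal basis e_1 = αf_1, e_2 = βf_1 + εf_2, e_3 = γf_1 + ζf_2 + ιf_3 (α, ε, ι ≠ 0), the generalised Killing endomorphism matrix A (computed by the structure-constant formula A_{11} = (1/4)(c_{12}^3 - c_{13}^2 - c_{23}^1), A_{12} = -(1/2)c_{23}^2, A_{13} = -(1/2)c_{23}^3, A_{21} = (1/2)c_{13}^1, A_{22} = (1/4)(c_{12}^3 + c_{13}^2 + c_{23}^1), A_{23} = (1/2)c_{13}^3, A_{31} = -(1/2)c_{12}^1, A_{32} = -(1/2)c_{12}^2, A_{33} = (1/4)(-c_{12}^3 - c_{13}^2 + c_{23}^1), where c_{ij}^k are the structure constants in the basis (e_1,e_2,e_3)) is symmetric if and only if x = -1. -/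
/-! In the frame `e`, `[e₁, e₂] = 0`, `[e₁, e₃] = ι e₁` and
`[e₂, e₃] = (βι(1 - x)/α) e₁ + xι e₂`. Hence the only off-diagonal pair of `A` that can differ is
`A₁₂ = -xι/2` against `A₂₁ = ι/2`, and these agree exactly when `x = -1`. -/

/-- The bracket of the Lie algebra `L(3,2,x)` in coordinates with respect to the basis
`(f_1, f_2, f_3)`: `[f_1, f_3] = f_1`, `[f_2, f_3] = x f_2`, `[f_1, f_2] = 0`. -/
def L32bracket (x : ℝ) (u v : Fin 3 → ℝ) : Fin 3 → ℝ :=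
  ![u 0 * v 2 - u 2 * v 0, x * (u 1 * v 2 - u 2 * v 1), 0]

/-- The generalised Killing endomorphism matrix built from structure constants. -/
noncomputable def gkMatrix (c12_1 c12_2 c12_3 c13_1 c13_2 c13_3 c23_1 c23_2 c23_3 : ℝ) :
    Matrix (Fin 3) (Fin 3) ℝ :=
  !![(1/4) * (c12_3 - c13_2 - c23_1), -(1/2) * c23_2, -(1/2) * c23_3;
     (1/2) * c13_1, (1/4) * (c12_3 + c13_2 + c23_1), (1/2) * c13_3;
     -(1/2) * c12_1, -(1/2) * c12_2, (1/4) * (-c12_3 - c13_2 + c23_1)]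

theorem gkMatrix_isSymm_iff (c12_1 c12_2 c12_3 c13_1 c13_2 c13_3 c23_1 c23_2 c23_3 : ℝ) :
    (gkMatrix c12_1 c12_2 c12_3 c13_1 c13_2 c13_3 c23_1 c23_2 c23_3).IsSymm ↔
      c23_2 = -c13_1 ∧ c23_3 = c12_1 ∧ c13_3 = -c12_2 := by
  simp only [gkMatrix, Matrix.IsSymm.ext_iff, Fin.forall_fin_succ, Matrix.of_apply,
    Matrix.cons_val', Matrix.cons_val_fin_one, Matrix.cons_val_zero, Matrix.cons_val_succ,
    forall_const, true_and, and_true]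
  constructor
  · rintro ⟨⟨h1, h2⟩, -, -, h3⟩
    exact ⟨by linarith, by linarith, by linarith⟩
  · rintro ⟨h1, h2, h3⟩
    refine ⟨⟨?_, ?_⟩, ⟨?_, ?_⟩, ?_, ?_⟩ <;> linarith

def triangularFrame (α β γ ε ζ ι : ℝ) : Fin 3 → Fin 3 → ℝ :=
  ![![α, 0, 0], ![β, ε, 0], ![γ, ζ, ι]]

section

variable {α β γ ε ζ ι : ℝ}

theorem triangularFrame_linearIndependent (hα : α ≠ 0) (hε : ε ≠ 0) (hι : ι ≠ 0) :
    LinearIndependent ℝ (triangularFrame α β γ ε ζ ι) := by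
  refine Matrix.linearIndependent_rows_of_isUnit (A := .of (triangularFrame α β γ ε ζ ι))
    ((Matrix.isUnit_iff_isUnit_det _).2 ?_)
  simp [triangularFrame, Matrix.det_fin_three, hα, hε, hι]

theorem L32bracket_triangularFrame_coords (x : ℝ) (hα : α ≠ 0) (hε : ε ≠ 0) (hι : ι ≠ 0)
    (c : Fin 3 → Fin 3 → Fin 3 → ℝ)
    (hc : ∀ i j, L32bracket x (triangularFrame α β γ ε ζ ι i) (triangularFrame α β γ ε ζ ι j) =
      ∑ k, c i j k • triangularFrame α β γ ε ζ ι k) :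
    c 0 1 = 0 ∧ c 0 2 = ![ι, 0, 0] ∧ c 1 2 = ![β * ι * (1 - x) / α, x * ι, 0] := by
  have hcoords := Fintype.linearIndependent_iffₛ.1 (triangularFrame_linearIndependent
    (β := β) (γ := γ) (ζ := ζ) hα hε hι)
  refine ⟨funext <| hcoords _ _ ?_, funext <| hcoords _ _ ?_, funext <| hcoords _ _ ?_⟩ <;>
    rw [← hc] <;> ext k <;> fin_cases k <;>
    simp [L32bracket, triangularFrame, Fin.sum_univ_three] <;> field_simp
  ring

end

theorem L32_gk_symm_iff_general (x α β γ ε ζ ι : ℝ)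
    (hα : α ≠ 0) (hε : ε ≠ 0) (hι : ι ≠ 0)
    (e : Fin 3 → Fin 3 → ℝ)
    (he : e = ![![α, 0, 0], ![β, ε, 0], ![γ, ζ, ι]])
    (c : Fin 3 → Fin 3 → Fin 3 → ℝ)
    (hc : ∀ i j, L32bracket x (e i) (e j) = ∑ k, c i j k • e k) :
    (gkMatrix (c 0 1 0) (c 0 1 1) (c 0 1 2) (c 0 2 0) (c 0 2 1) (c 0 2 2)
        (c 1 2 0) (c 1 2 1) (c 1 2 2)).IsSymm ↔ x = -1 := by
  obtain ⟨h01, h02, h12⟩ := L32bracket_triangularFrame_coords x hα hε hι c (he ▸ hc)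
  rw [gkMatrix_isSymm_iff, h01, h02, h12]
  simp only [Matrix.cons_val_one, Matrix.cons_val_zero, Matrix.cons_val, Pi.zero_apply, neg_zero,
    and_self, and_true]
  rw [← neg_one_mul ι, mul_left_inj' hι]

theorem L32_gk_symm_iff (x α β γ ε ζ ι : ℝ)
    (hx : 0 < |x|) (hx1 : |x| ≤ 1)
    (hα : α ≠ 0) (hε : ε ≠ 0) (hι : ι ≠ 0)
    (e : Fin 3 → Fin 3 → ℝ)
    (he : e = ![![α, 0, 0], ![β, ε, 0], ![γ, ζ, ι]])
    (c : Fin 3 → Fin 3 → Fin 3 → ℝ)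
    (hc : ∀ i j, L32bracket x (e i) (e j) = ∑ k, c i j k • e k) :
    (gkMatrix (c 0 1 0) (c 0 1 1) (c 0 1 2) (c 0 2 0) (c 0 2 1) (c 0 2 2)
        (c 1 2 0) (c 1 2 1) (c 1 2 2)).IsSymm ↔ x = -1 :=
  L32_gk_symm_iff_general x α β γ ε ζ ι hα hε hι e he c hc
end

section
/- For the Lie algebra L(3,2,-1) (the Poincaré algebra p(1,1)) with orthonormal basis obtained via an upper-triangular change of basis with diagonal entries α, ε, ι > 0, the generalised Killing endomorphism has matrix A = [[(−2)βι/(4α), ι/2, 0], [ι/2, 2βι/(4α), 0], [0, 0, 2βι/(4α)]] (i.e., with x = -1 in the general formula), whose three eigenvalues βι/(2α), √(α²ι² + β²ι²)/(2α), -√(α²ι² + β²ι²)/(2α) are pairwise distinct. -/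
/-!
With `b = ι/2` and `c = βι/(2α)` the matrix is `!![-c, b, 0; b, c, 0; 0, 0, c]`: the block
`!![-c, b; b, c]` is symmetric and traceless, so its eigenvalues are `±r` with
`r² = b² + c²`, with eigenvectors `(b, c ± r)`, while `e₃` has eigenvalue `c`. Since `b ≠ 0`,
`r² > c²`, which separates the three eigenvalues.
-/

open Matrix

section Eigen

variable {R : Type*} [CommRing R]

lemma mulVec_tracelessBlock_of_sq_eq (b c r : R) (hr : r ^ 2 = b ^ 2 + c ^ 2) :
    !![-c, b, 0; b, c, 0; 0, 0, c] *ᵥ ![b, r + c, 0] = r • ![b, r + c, 0] := by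
  ext i
  fin_cases i <;>
    simp only [Fin.zero_eta, Fin.mk_one, Fin.reduceFinMk, mulVec, dotProduct, Fin.sum_univ_three,
      of_apply, cons_val', cons_val_fin_one, cons_val_zero, cons_val_one, cons_val, Pi.smul_apply,
      smul_eq_mul, Fin.isValue]
  · ring
  · linear_combination -hr
  · ring

lemma mulVec_tracelessBlock_e3 (b c : R) :
    !![-c, b, 0; b, c, 0; 0, 0, c] *ᵥ ![0, 0, 1] = c • ![0, 0, 1] := by
  ext i
  fin_cases i <;> simp [Matrix.mulVec, dotProduct, Fin.sum_univ_three]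

end Eigen

section Distinct

variable {K : Type*} [Field K] [LinearOrder K] [IsStrictOrderedRing K]

lemma ne_and_ne_neg_of_sq_eq {b c r : K} (hb : b ≠ 0) (hr : r ^ 2 = b ^ 2 + c ^ 2) :
    c ≠ r ∧ c ≠ -r ∧ r ≠ -r := by
  have hb2 : 0 < b ^ 2 := by positivity
  refine ⟨?_, ?_, ?_⟩ <;> intro h
  · subst h; linarith
  · subst h; nlinarith
  · have : r = 0 := by linarith
    subst this; nlinarith [sq_nonneg c]

end Distinct

theorem L32_neg1_eigenvalues_general (α β ι : ℝ)
    (hα : 0 < α) (hι : 0 < ι)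
    (A : Matrix (Fin 3) (Fin 3) ℝ)
    (hA : A = !![(-2 : ℝ) * β * ι / (4 * α), ι / 2, 0;
                 ι / 2, 2 * β * ι / (4 * α), 0;
                 0, 0, 2 * β * ι / (4 * α)]) :
    (β * ι / (2 * α) ≠ Real.sqrt (α^2 * ι^2 + β^2 * ι^2) / (2 * α)
      ∧ β * ι / (2 * α) ≠ -(Real.sqrt (α^2 * ι^2 + β^2 * ι^2) / (2 * α))
      ∧ Real.sqrt (α^2 * ι^2 + β^2 * ι^2) / (2 * α)
          ≠ -(Real.sqrt (α^2 * ι^2 + β^2 * ι^2) / (2 * α)))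
    ∧ (∃ v : Fin 3 → ℝ, v ≠ 0 ∧ A.mulVec v = (β * ι / (2 * α)) • v)
    ∧ (∃ v : Fin 3 → ℝ, v ≠ 0 ∧
        A.mulVec v = (Real.sqrt (α^2 * ι^2 + β^2 * ι^2) / (2 * α)) • v)
    ∧ (∃ v : Fin 3 → ℝ, v ≠ 0 ∧
        A.mulVec v = (-(Real.sqrt (α^2 * ι^2 + β^2 * ι^2) / (2 * α))) • v) := by
  set c := β * ι / (2 * α)
  set r := Real.sqrt (α^2 * ι^2 + β^2 * ι^2) / (2 * α)
  have hb : ι / 2 ≠ 0 := by positivity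
  have hA' : A = !![-c, ι / 2, 0; ι / 2, c, 0; 0, 0, c] := by
    have h₁ : (-2 : ℝ) * β * ι / (4 * α) = -c := by ring
    have h₂ : 2 * β * ι / (4 * α) = c := by ring
    rw [hA, h₁, h₂]
  have hr : r ^ 2 = (ι / 2) ^ 2 + c ^ 2 := by
    simp only [r, c, div_pow, Real.sq_sqrt (by positivity : (0 : ℝ) ≤ α^2 * ι^2 + β^2 * ι^2)]
    field_simp
  have hr' : (-r) ^ 2 = (ι / 2) ^ 2 + c ^ 2 := by rw [neg_sq, hr]
  have eigenvector (s : ℝ) (hs : s ^ 2 = (ι / 2) ^ 2 + c ^ 2) :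
      ∃ v : Fin 3 → ℝ, v ≠ 0 ∧ A *ᵥ v = s • v :=
    ⟨![ι / 2, s + c, 0], fun h => hb (congrFun h 0),
      hA' ▸ mulVec_tracelessBlock_of_sq_eq _ _ _ hs⟩
  exact ⟨ne_and_ne_neg_of_sq_eq hb hr,
    ⟨![0, 0, 1], fun h => one_ne_zero (congrFun h 2), hA' ▸ mulVec_tracelessBlock_e3 _ _⟩,
    eigenvector r hr, eigenvector (-r) hr'⟩

/-- For `L(3,2,-1)` (the Poincaré algebra `p(1,1)`), the generalised Killing
endomorphism matrix (the general formula evaluated at `x = -1`) has the three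
pairwise distinct eigenvalues `βι/(2α)` and `±√(α²ι² + β²ι²)/(2α)`. -/
theorem L32_neg1_eigenvalues (α β γ ε ζ ι : ℝ)
    (hα : 0 < α) (hε : 0 < ε) (hι : 0 < ι)
    (A : Matrix (Fin 3) (Fin 3) ℝ)
    (hA : A = !![(-2 : ℝ) * β * ι / (4 * α), ι / 2, 0;
                 ι / 2, 2 * β * ι / (4 * α), 0;
                 0, 0, 2 * β * ι / (4 * α)]) :
    (β * ι / (2 * α) ≠ Real.sqrt (α^2 * ι^2 + β^2 * ι^2) / (2 * α)
      ∧ β * ι / (2 * α) ≠ -(Real.sqrt (α^2 * ι^2 + β^2 * ι^2) / (2 * α))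
      ∧ Real.sqrt (α^2 * ι^2 + β^2 * ι^2) / (2 * α)
          ≠ -(Real.sqrt (α^2 * ι^2 + β^2 * ι^2) / (2 * α)))
    ∧ (∃ v : Fin 3 → ℝ, v ≠ 0 ∧ A.mulVec v = (β * ι / (2 * α)) • v)
    ∧ (∃ v : Fin 3 → ℝ, v ≠ 0 ∧
        A.mulVec v = (Real.sqrt (α^2 * ι^2 + β^2 * ι^2) / (2 * α)) • v)
    ∧ (∃ v : Fin 3 → ℝ, v ≠ 0 ∧
        A.mulVec v = (-(Real.sqrt (α^2 * ι^2 + β^2 * ι^2) / (2 * α))) • v) :=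
  L32_neg1_eigenvalues_general α β ι hα hι A hA
end

section
/- For x = 0 (the Euclidean algebra e(2)), the matrix A = (1/(4 det P))·[[ι²(α²-β²-ε²), 2αβι², 0], [2αβι², ι²(-α²+β²+ε²), 0], [0, 0, ι²(α²+β²+ε²)]] has eigenvalues λ, √(λ² - ι²/4), and -√(λ² - ι²/4), where λ = ι²(α²+β²+ε²)/(4 det P). -/
open Polynomial

theorem Matrix.charpoly_fin_three_of_block_diag {R : Type*} [CommRing R] (a b c d e : R) :
    (!![a, b, 0; c, d, 0; 0, 0, e] : Matrix (Fin 3) (Fin 3) R).charpoly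
      = (X - C e) * (X ^ 2 - C (a + d) * X + C (a * d - b * c)) := by
  rw [Matrix.charpoly, Matrix.det_fin_three]
  simp
  ring

theorem E2_gk_charpoly_general (α β ε ι : ℝ)
    (hα : 0 < α) (hε : 0 < ε) (hι : 0 < ι)
    (lam : ℝ) (hlam : lam = ι^2 * (α^2 + β^2 + ε^2) / (4 * (α * ε * ι)))
    (A : Matrix (Fin 3) (Fin 3) ℝ)
    (hA : A = (1 / (4 * (α * ε * ι))) •
      !![ι^2 * (α^2 - β^2 - ε^2), 2 * α * β * ι^2, 0;
         2 * α * β * ι^2, ι^2 * (-α^2 + β^2 + ε^2), 0;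
         0, 0, ι^2 * (α^2 + β^2 + ε^2)]) :
    A.charpoly = (X - C lam) * (X^2 - C (lam^2 - ι^2 / 4)) := by
  set s : ℝ := 1 / (4 * (α * ε * ι))
  have hs : s * (4 * (α * ε * ι)) = 1 := one_div_mul_cancel (by positivity)
  have hA' : A = !![s * (ι^2 * (α^2 - β^2 - ε^2)), s * (2 * α * β * ι^2), 0;
      s * (2 * α * β * ι^2), s * (ι^2 * (-α^2 + β^2 + ε^2)), 0;
      0, 0, s * (ι^2 * (α^2 + β^2 + ε^2))] := by
    rw [hA]
    ext i j
    fin_cases i <;> fin_cases j <;> simp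
  have hlam' : s * (ι^2 * (α^2 + β^2 + ε^2)) = lam := by
    rw [hlam]; ring
  -- `(α² - β² - ε²)² + (2αβ)² = (α² + β² + ε²)² - (2αε)²`, and `s · ι² · 2αε = ι / 2`.
  have hdet : s * (ι^2 * (α^2 - β^2 - ε^2)) * (s * (ι^2 * (-α^2 + β^2 + ε^2)))
      - s * (2 * α * β * ι^2) * (s * (2 * α * β * ι^2)) = -(lam^2 - ι^2 / 4) := by
    rw [← hlam']
    linear_combination (s * ι ^ 3 * (α * ε) + ι ^ 2 / 4) * hs
  have htrace : s * (ι^2 * (α^2 - β^2 - ε^2)) + s * (ι^2 * (-α^2 + β^2 + ε^2)) = 0 := by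
    ring
  rw [hA', Matrix.charpoly_fin_three_of_block_diag, hlam', htrace, hdet, C_0, map_neg]
  ring

/-- For the Euclidean algebra `e(2)` (`x = 0`), the generalised Killing endomorphism
matrix has characteristic polynomial `(X - λ)(X² - (λ² - ι²/4))`, i.e. eigenvalues
`λ` and `±√(λ² - ι²/4)`, where `λ = ι²(α²+β²+ε²)/(4 det P)`. -/
theorem E2_gk_charpoly (α β γ ε ζ ι : ℝ)
    (hα : 0 < α) (hε : 0 < ε) (hι : 0 < ι)
    (lam : ℝ) (hlam : lam = ι^2 * (α^2 + β^2 + ε^2) / (4 * (α * ε * ι)))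
    (A : Matrix (Fin 3) (Fin 3) ℝ)
    (hA : A = (1 / (4 * (α * ε * ι))) •
      !![ι^2 * (α^2 - β^2 - ε^2), 2 * α * β * ι^2, 0;
         2 * α * β * ι^2, ι^2 * (-α^2 + β^2 + ε^2), 0;
         0, 0, ι^2 * (α^2 + β^2 + ε^2)]) :
    A.charpoly = (X - C lam) * (X^2 - C (lam^2 - ι^2 / 4)) :=
  E2_gk_charpoly_general α β ε ι hα hε hι lam hlam A hA
end
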